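/- arXiv:2211.06071 — 2 statements merged into one kernel-verified Lean document; each statement's English description precedes it below -/
import Mathlib

section
/- Let $(\mathcal{D}_v, \mu_v)$ be a probability space, $\{\Phi_{v,h}\}_{h}$ an orthonormal family with uniform bound $B_v \geq 1$, $g = \sum_{h \in \tilde{I}} \hat{g}_h \Phi_{v,h} \not\equiv 0$ with $\tilde{I}$ finite, and $\Psi$ a bounded measurable function with $\|\Psi\|_{L_1} < \delta_\Psi$. Let $X$ be a random vector distributed according to $\mu_v$. If $\max_{h \in \tilde{I}} |\hat{g}_h| > B_v(\delta_+ + \delta_\Psi)$ for some $\delta_+ > 0$, then $\mathbb{P}(|(g + \Psi)(X)| < \delta_+) \leq 1 - \frac{B_v^{-1} \max_{h \in \tilde{I}} |\hat{g}_h| - \delta_\Psi - \delta_+}{B_v \sum_{h \in \tilde{I}} |\hat{g}_h| + \|\Psi\|_{L_\infty}}$, and this bound is strictly less than $1$. -/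
/-!
Testing `g` against the conjugate of `Φ h₀`, for `h₀` carrying the largest coefficient, gives
`c h₀ = ∫ g · conj (Φ h₀)`, hence `max_h ‖c h‖ ≤ B ‖g‖_{L¹} ≤ B (‖g + Ψ‖_{L¹} + δΨ)`. On the event
`‖g + Ψ‖ < δ₊` the integrand `‖g + Ψ‖` is below `δ₊`, and elsewhere it is below the sup bound
`B ∑_h ‖c h‖ + ‖Ψ‖_∞`; so a large coefficient forces the complementary event to have probability
at least `(B⁻¹ max_h ‖c h‖ - δΨ - δ₊) / (B ∑_h ‖c h‖ + ‖Ψ‖_∞)`.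
-/

open MeasureTheory

section

variable {α E : Type*} [MeasurableSpace α] {μ : Measure α} [NormedAddCommGroup E]

lemma integral_norm_le_of_ae_norm_le [IsProbabilityMeasure μ] {f : α → E}
    (hf : AEStronglyMeasurable f μ) {δ K : ℝ} (hδ : 0 ≤ δ) (hK : ∀ᵐ x ∂μ, ‖f x‖ ≤ K) :
    ∫ x, ‖f x‖ ∂μ ≤ δ + K * (1 - μ.real {x | ‖f x‖ < δ}) := by
  set A := {x | ‖f x‖ < δ}
  have hA : NullMeasurableSet A μ := nullMeasurableSet_lt hf.norm.aemeasurable aemeasurable_const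
  have hint : Integrable (fun x => ‖f x‖) μ := (Integrable.of_bound hf K hK).norm
  have h_on : ∫ x in A, ‖f x‖ ∂μ ≤ δ := by
    refine (Real.le_norm_self _).trans <|
      (norm_setIntegral_le_of_norm_le_const_ae' (by finiteness) ?_).trans
        (mul_le_of_le_one_right hδ measureReal_le_one)
    exact Filter.Eventually.of_forall fun x hx => by simpa using hx.le
  have h_off : ∫ x in Aᶜ, ‖f x‖ ∂μ ≤ K * (1 - μ.real A) := by
    rw [← probReal_univ (μ := μ), ← measureReal_compl₀ hA]
    refine (Real.le_norm_self _).trans (norm_setIntegral_le_of_norm_le_const_ae' (by finiteness) ?_)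
    filter_upwards [hK] with x hx _ using by simpa using hx
  rw [← integral_add_compl₀ hA hint]
  exact add_le_add h_on h_off

lemma integral_norm_le_integral_norm_add {f g : α → E} (hf : Integrable f μ)
    (hg : Integrable g μ) : ∫ x, ‖f x‖ ∂μ ≤ ∫ x, ‖f x + g x‖ ∂μ + ∫ x, ‖g x‖ ∂μ := by
  have hfg : Integrable (fun x => ‖f x + g x‖) μ := (hf.add hg).norm
  rw [← integral_add hfg hg.norm]
  exact integral_mono hf.norm (hfg.add hg.norm) fun x => norm_le_add_norm_add _ _

lemma ae_norm_sum_mul_le {R ι : Type*} [SeminormedRing R] (s : Finset ι) (Φ : ι → α → R)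
    (c : ι → R) {B : ℝ}
    (hΦ : ∀ h ∈ s, ∀ᵐ x ∂μ, ‖Φ h x‖ ≤ B) :
    ∀ᵐ x ∂μ, ‖∑ h ∈ s, c h * Φ h x‖ ≤ B * ∑ h ∈ s, ‖c h‖ := by
  filter_upwards [(ae_ball_iff s.countable_toSet).2 hΦ] with x hx
  calc ‖∑ h ∈ s, c h * Φ h x‖ ≤ ∑ h ∈ s, ‖c h‖ * B := by
        refine (norm_sum_le _ _).trans (Finset.sum_le_sum fun h hh => ?_)
        exact (norm_mul_le _ _).trans (mul_le_mul_of_nonneg_left (hx h hh) (norm_nonneg _))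
    _ = B * ∑ h ∈ s, ‖c h‖ := by rw [← Finset.sum_mul, mul_comm]

section Orthonormal

variable [IsFiniteMeasure μ] {𝕜 ι : Type*} [RCLike 𝕜] [DecidableEq ι] {s : Finset ι}
  {Φ : ι → α → 𝕜} (c : ι → 𝕜) (hΦ : ∀ h ∈ s, MemLp (Φ h) ⊤ μ)
  (hortho : ∀ h₁ ∈ s, ∀ h₂ ∈ s,
    (∫ x, Φ h₁ x * (starRingEnd 𝕜) (Φ h₂ x) ∂μ) = if h₁ = h₂ then 1 else 0)
include hΦ hortho

lemma integral_sum_mul_conj_eq_coeff {h₀ : ι} (hh₀ : h₀ ∈ s) :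
    ∫ x, (∑ h ∈ s, c h * Φ h x) * (starRingEnd 𝕜) (Φ h₀ x) ∂μ = c h₀ := by
  have hint : ∀ h ∈ s, Integrable (fun x => c h * (Φ h x * (starRingEnd 𝕜) (Φ h₀ x))) μ :=
    fun h hh => (((hΦ h hh).integrable le_top).mul_of_top_left (hΦ h₀ hh₀).star).const_mul _
  simp_rw [Finset.sum_mul, mul_assoc]
  rw [integral_finsetSum s hint]
  simp_rw [integral_const_mul]
  rw [Finset.sum_congr rfl fun h hh => by rw [hortho h hh h₀ hh₀]]
  simp [hh₀]

lemma norm_coeff_le_mul_integral_norm_sum {h₀ : ι} (hh₀ : h₀ ∈ s) {B : ℝ}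
    (hB : ∀ᵐ x ∂μ, ‖Φ h₀ x‖ ≤ B) :
    ‖c h₀‖ ≤ B * ∫ x, ‖∑ h ∈ s, c h * Φ h x‖ ∂μ := by
  have hg : Integrable (fun x => ∑ h ∈ s, c h * Φ h x) μ :=
    integrable_finsetSum s fun h hh => ((hΦ h hh).integrable le_top).const_mul _
  calc ‖c h₀‖ = ‖∫ x, (∑ h ∈ s, c h * Φ h x) * (starRingEnd 𝕜) (Φ h₀ x) ∂μ‖ := by
        rw [integral_sum_mul_conj_eq_coeff c hΦ hortho hh₀]
    _ ≤ ∫ x, ‖∑ h ∈ s, c h * Φ h x‖ * B ∂μ := by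
        refine norm_integral_le_of_norm_le (hg.norm.mul_const B) ?_
        filter_upwards [hB] with x hx
        rw [norm_mul, RingHomIsometric.norm_map]
        exact mul_le_mul_of_nonneg_left hx (norm_nonneg _)
    _ = B * ∫ x, ‖∑ h ∈ s, c h * Φ h x‖ ∂μ := by rw [integral_mul_const, mul_comm]

end Orthonormal

end

theorem stmt3_general
    {D : Type*} [MeasurableSpace D] {μ : Measure D} [IsProbabilityMeasure μ]
    {ι : Type*} [DecidableEq ι] (s : Finset ι) (hs : s.Nonempty)
    (Φ : ι → D → ℂ) (c : ι → ℂ) (B : ℝ) (hB : 1 ≤ B)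
    (hmeas : ∀ h ∈ s, Measurable (Φ h))
    (hΦ : ∀ h ∈ s, ∀ᵐ x ∂μ, ‖Φ h x‖ ≤ B)
    (hortho : ∀ h₁ ∈ s, ∀ h₂ ∈ s,
      (∫ x, Φ h₁ x * (starRingEnd ℂ) (Φ h₂ x) ∂μ) = if h₁ = h₂ then 1 else 0)
    (Ψ : D → ℂ) (hΨbdd : MemLp Ψ ⊤ μ)
    (δΨ δplus : ℝ) (hδΨ : 0 < δΨ) (hδplus : 0 < δplus)
    (hΨ1 : (∫ x, ‖Ψ x‖ ∂μ) < δΨ)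
    (hmax : B * (δplus + δΨ) < s.sup' hs fun h => ‖c h‖) :
    (μ {x | ‖(∑ h ∈ s, c h * Φ h x) + Ψ x‖ < δplus}).toReal
        ≤ 1 - (B⁻¹ * (s.sup' hs fun h => ‖c h‖) - δΨ - δplus)
            / (B * (∑ h ∈ s, ‖c h‖) + (eLpNorm Ψ ⊤ μ).toReal)
      ∧ 1 - (B⁻¹ * (s.sup' hs fun h => ‖c h‖) - δΨ - δplus)
            / (B * (∑ h ∈ s, ‖c h‖) + (eLpNorm Ψ ⊤ μ).toReal) < 1 := by
  set M := s.sup' hs fun h => ‖c h‖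
  set g := fun x => ∑ h ∈ s, c h * Φ h x
  set K := B * (∑ h ∈ s, ‖c h‖) + (eLpNorm Ψ ⊤ μ).toReal
  set A := {x | ‖g x + Ψ x‖ < δplus}
  have hB0 : 0 < B := zero_lt_one.trans_le hB
  have hΦL : ∀ h ∈ s, MemLp (Φ h) ⊤ μ :=
    fun h hh => MemLp.of_bound (hmeas h hh).aestronglyMeasurable B (hΦ h hh)
  have hgL : MemLp g ⊤ μ := by
    simpa [g] using memLp_finsetSum s fun h hh => (hΦL h hh).const_mul (c h)
  have hnum : 0 < B⁻¹ * M - δΨ - δplus := by linarith [(lt_inv_mul_iff₀ hB0).2 hmax]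
  have hK : 0 < K := by
    have hM : 0 < M := (by positivity : 0 < B * (δplus + δΨ)).trans hmax
    have hMS : M ≤ ∑ h ∈ s, ‖c h‖ :=
      Finset.sup'_le hs _ fun h hh => Finset.single_le_sum (fun i _ => norm_nonneg (c i)) hh
    exact add_pos_of_pos_of_nonneg (mul_pos hB0 (hM.trans_le hMS)) ENNReal.toReal_nonneg
  obtain ⟨h₀, hh₀, hMh₀⟩ := Finset.exists_mem_eq_sup' hs fun h => ‖c h‖
  have hcoef : B⁻¹ * M ≤ ∫ x, ‖g x‖ ∂μ := by
    rw [inv_mul_le_iff₀ hB0]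
    exact hMh₀.le.trans <| norm_coeff_le_mul_integral_norm_sum c hΦL hortho hh₀ (hΦ h₀ hh₀)
  have htri :=
    integral_norm_le_integral_norm_add (hgL.integrable le_top) (hΨbdd.integrable le_top)
  have hsplit : ∫ x, ‖g x + Ψ x‖ ∂μ ≤ δplus + K * (1 - μ.real A) := by
    refine integral_norm_le_of_ae_norm_le (hgL.1.add hΨbdd.1) hδplus.le ?_
    filter_upwards [ae_norm_sum_mul_le s Φ c hΦ, ae_le_lpNorm_exponent_top hΨbdd] with x hg hΨ
    rw [← toReal_eLpNorm hΨbdd.1] at hΨ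
    exact (norm_add_le _ _).trans (add_le_add hg hΨ)
  have hgap : (B⁻¹ * M - δΨ - δplus) / K ≤ 1 - μ.real A := by
    rw [div_le_iff₀' hK]
    linarith
  exact ⟨by change μ.real A ≤ _; linarith, by linarith [div_pos hnum hK]⟩

/-- Lemma (trig_prob), single-sample version: for `g = ∑_{h∈s} c h • Φ h ≠ 0`
built from an orthonormal family bounded by `B ≥ 1`, and a bounded perturbation
`Ψ` with `‖Ψ‖_{L¹} < δΨ`, if `max_h |c h| > B (δ₊ + δΨ)` then the probability
(w.r.t. a `μ`-distributed sample) that `|(g+Ψ)(X)| < δ₊` is at most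
`q := 1 - (B⁻¹ max_h |c h| - δΨ - δ₊)/(B ∑_h |c h| + ‖Ψ‖_∞)`, and `q < 1`. -/
theorem stmt3
    {D : Type*} [MeasurableSpace D] {μ : Measure D} [IsProbabilityMeasure μ]
    {ι : Type*} [DecidableEq ι] (s : Finset ι) (hs : s.Nonempty)
    (Φ : ι → D → ℂ) (c : ι → ℂ) (B : ℝ) (hB : 1 ≤ B)
    (hmeas : ∀ h ∈ s, Measurable (Φ h))
    (hΦ : ∀ h ∈ s, ∀ᵐ x ∂μ, ‖Φ h x‖ ≤ B)
    (hortho : ∀ h₁ ∈ s, ∀ h₂ ∈ s,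
      (∫ x, Φ h₁ x * (starRingEnd ℂ) (Φ h₂ x) ∂μ) = if h₁ = h₂ then 1 else 0)
    (Ψ : D → ℂ) (hΨmeas : Measurable Ψ) (hΨbdd : MemLp Ψ ⊤ μ)
    (δΨ δplus : ℝ) (hδΨ : 0 < δΨ) (hδplus : 0 < δplus)
    (hΨ1 : (∫ x, ‖Ψ x‖ ∂μ) < δΨ)
    (hmax : B * (δplus + δΨ) < s.sup' hs fun h => ‖c h‖) :
    (μ {x | ‖(∑ h ∈ s, c h * Φ h x) + Ψ x‖ < δplus}).toReal
        ≤ 1 - (B⁻¹ * (s.sup' hs fun h => ‖c h‖) - δΨ - δplus)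
            / (B * (∑ h ∈ s, ‖c h‖) + (eLpNorm Ψ ⊤ μ).toReal)
      ∧ 1 - (B⁻¹ * (s.sup' hs fun h => ‖c h‖) - δΨ - δplus)
            / (B * (∑ h ∈ s, ‖c h‖) + (eLpNorm Ψ ⊤ μ).toReal) < 1 :=
  stmt3_general s hs Φ c B hB hmeas hΦ hortho Ψ hΨbdd δΨ δplus hδΨ hδplus hΨ1 hmax
end

section
/- Let $0 < \delta_\Psi$, $\delta_+ > 0$, $B \geq 1$, $C_Q > 0$, $\delta > 0$, let $I$ be a finite nonempty set of indices with $|c_h| > 3\delta$ for at least one $h \in I$ attaining the maximum, assume $3B(\delta_+ + \delta_\Psi) < \max_{h \in I}|c_h|$, and let $T = \sum_{h \notin I} |c_h| < \infty$. Define $q = 1 - \frac{B^{-1}\max_{h \in I}|c_h| - \delta_\Psi - \delta_+}{B \sum_{h \in I}|c_h| + B^2 C_Q T}$. Then $q^{-1} \geq 1 + \frac{2\delta B^{-2}}{3\delta |I| + B C_Q T}$. -/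
private lemma one_add_le_inv_one_sub {a : ℝ} (ha : 0 ≤ a) (ha' : a < 1) :
    1 + a ≤ (1 - a)⁻¹ := by
  have hpos : 0 < 1 - a := by linarith
  rw [inv_eq_one_div, le_div_iff₀ hpos]
  nlinarith

/-- Key quantitative step of Lemma 5: with
`q = 1 - (B⁻¹ M - δΨ - δ₊)/(B S + B² C_Q T)` where `M = max_{h∈I} |c h|`,
`S = ∑_{h∈I} |c h|`, one has `q⁻¹ ≥ 1 + (2δ B⁻²)/(3δ |I| + B C_Q T)`. -/
theorem stmt11
    {ι : Type*} (I : Finset ι) (hI : I.Nonempty) (c : ι → ℂ)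
    (B CQ T δ δΨ δplus : ℝ)
    (hB : 1 ≤ B) (hCQ : 0 < CQ) (hT : 0 ≤ T) (hδ : 0 < δ)
    (hδΨ : 0 < δΨ) (hδplus : 0 < δplus)
    (hbig : ∀ h ∈ I, 3 * δ ≤ ‖c h‖)
    (hMδ : 3 * δ < I.sup' hI fun h => ‖c h‖)
    (hM3B : 3 * B * (δplus + δΨ) < I.sup' hI fun h => ‖c h‖) :
    1 + (2 * δ * (B ^ 2)⁻¹) / (3 * δ * I.card + B * CQ * T)
      ≤ (1 - ((B⁻¹ * (I.sup' hI fun h => ‖c h‖) - δΨ - δplus)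
            / (B * (∑ h ∈ I, ‖c h‖) + B ^ 2 * CQ * T)))⁻¹ := by
  set M := I.sup' hI fun h => ‖c h‖ with hMdef
  set S := ∑ h ∈ I, ‖c h‖ with hSdef
  have hSM : M ≤ S := by
    obtain ⟨h0, hh0, heq⟩ := I.exists_mem_eq_sup' hI fun h => ‖c h‖
    rw [hSdef, hMdef, heq]
    exact Finset.single_le_sum (fun i _ => norm_nonneg _) hh0
  have hScard : S ≤ (I.card : ℝ) * M := by
    calc S ≤ ∑ _h ∈ I, M := Finset.sum_le_sum fun h hh =>
              Finset.le_sup' (fun h => ‖c h‖) hh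
    _ = (I.card : ℝ) * M := by rw [Finset.sum_const, nsmul_eq_mul]
  clear_value M S
  have hB0 : (0:ℝ) < B := lt_of_lt_of_le one_pos hB
  have hMpos : 0 < M := lt_trans (by positivity) hMδ
  have hS : 0 < S := hMpos.trans_le hSM
  have hn1 : (1:ℝ) ≤ I.card := by
    have := Finset.card_pos.mpr hI
    exact_mod_cast this
  have hB2CQT : 0 ≤ B ^ 2 * CQ * T := by positivity
  have hBCQT : 0 ≤ B * CQ * T := by positivity
  have hDpos : 0 < B * S + B ^ 2 * CQ * T := by nlinarith [mul_pos hB0 hS]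
  have hdpos : 0 < 3 * δ * (I.card : ℝ) + B * CQ * T := by nlinarith
  set N := B⁻¹ * M - δΨ - δplus with hNdef
  clear_value N
  have hBinv : 0 < B⁻¹ := inv_pos.mpr hB0
  have hBB : B⁻¹ * B = 1 := inv_mul_cancel₀ hB0.ne'
  have hNlb : 2/3 * (B⁻¹ * M) ≤ N := by
    have h1 : δplus + δΨ ≤ B⁻¹ * M / 3 := by
      rw [le_div_iff₀ (by norm_num : (0:ℝ) < 3)]
      calc (δplus + δΨ) * 3 = B⁻¹ * (3 * B * (δplus + δΨ)) := by
            field_simp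
        _ ≤ B⁻¹ * M := mul_le_mul_of_nonneg_left hM3B.le hBinv.le
    rw [hNdef]; linarith
  have hNpos : 0 < N := by nlinarith [mul_pos hBinv hMpos]
  have hBinvle : B⁻¹ ≤ 1 := by
    rw [inv_le_one_iff₀]; right; exact hB
  have hNltD : N < B * S + B ^ 2 * CQ * T := by
    have h2 : B⁻¹ * M ≤ M := by nlinarith
    have h3 : S ≤ B * S := by nlinarith
    have h1 : N < B⁻¹ * M := by rw [hNdef]; linarith
    linarith
  have ha1 : N / (B * S + B ^ 2 * CQ * T) < 1 := (div_lt_one hDpos).mpr hNltD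
  have ha0 : 0 ≤ N / (B * S + B ^ 2 * CQ * T) := div_nonneg hNpos.le hDpos.le
  -- key comparison
  have hkey : (2 * δ * (B ^ 2)⁻¹) / (3 * δ * I.card + B * CQ * T)
      ≤ N / (B * S + B ^ 2 * CQ * T) := by
    rw [div_le_div_iff₀ hdpos hDpos]
    have hsq : (B ^ 2)⁻¹ = B⁻¹ * B⁻¹ := by rw [sq, mul_inv]
    have e1 : 2 * δ * (B ^ 2)⁻¹ * (B * S + B ^ 2 * CQ * T)
        = 2 * δ * B⁻¹ * S + 2 * δ * (CQ * T) := by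
      rw [hsq]
      have h : 2 * δ * (B⁻¹ * B⁻¹) * (B * S + B ^ 2 * CQ * T)
          = 2 * δ * B⁻¹ * S * (B⁻¹ * B)
            + 2 * δ * (CQ * T) * ((B⁻¹ * B) * (B⁻¹ * B)) := by ring
      rw [h, hBB]; ring
    have e2 : (2/3 * (B⁻¹ * M)) * (3 * δ * (I.card : ℝ) + B * CQ * T)
        = 2 * δ * B⁻¹ * ((I.card : ℝ) * M) + 2/3 * M * (CQ * T) := by
      have h : (2/3 * (B⁻¹ * M)) * (3 * δ * (I.card : ℝ) + B * CQ * T)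
          = 2 * δ * B⁻¹ * ((I.card : ℝ) * M)
            + 2/3 * M * (CQ * T) * (B⁻¹ * B) := by ring
      rw [h, hBB]; ring
    have step1 : 2 * δ * B⁻¹ * S ≤ 2 * δ * B⁻¹ * ((I.card : ℝ) * M) :=
      mul_le_mul_of_nonneg_left hScard (by positivity)
    have step2 : 2 * δ * (CQ * T) ≤ 2/3 * M * (CQ * T) := by
      have hct : 0 ≤ CQ * T := mul_nonneg hCQ.le hT
      exact mul_le_mul_of_nonneg_right (by linarith) hct
    have step3 : (2/3 * (B⁻¹ * M)) * (3 * δ * (I.card : ℝ) + B * CQ * T)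
        ≤ N * (3 * δ * (I.card : ℝ) + B * CQ * T) :=
      mul_le_mul_of_nonneg_right hNlb hdpos.le
    calc 2 * δ * (B ^ 2)⁻¹ * (B * S + B ^ 2 * CQ * T)
        = 2 * δ * B⁻¹ * S + 2 * δ * (CQ * T) := e1
      _ ≤ 2 * δ * B⁻¹ * ((I.card : ℝ) * M) + 2/3 * M * (CQ * T) := by linarith
      _ = (2/3 * (B⁻¹ * M)) * (3 * δ * (I.card : ℝ) + B * CQ * T) := e2.symm
      _ ≤ N * (3 * δ * (I.card : ℝ) + B * CQ * T) := step3
  -- conclude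
  calc 1 + (2 * δ * (B ^ 2)⁻¹) / (3 * δ * I.card + B * CQ * T)
      ≤ 1 + N / (B * S + B ^ 2 * CQ * T) := by linarith
    _ ≤ (1 - N / (B * S + B ^ 2 * CQ * T))⁻¹ := one_add_le_inv_one_sub ha0 ha1
end
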